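/- Let (G_j)_{j∈ℕ} be a countable family of countable MF-groups. Then the restricted direct product ⨁_j G_j, i.e., the subgroup of ∏_{j∈ℕ} G_j consisting of those elements g with g_j = 1 for all but finitely many j, is an MF-group. -/

import Mathlib

open Filter

/-- The operator norm (as operators on `ℂⁿ` with the `ℓ²` norm) of a complex matrix. -/
noncomputable def matOpNorm {N : Type*} [Fintype N] [DecidableEq N]
    (A : Matrix N N ℂ) : ℝ :=
  ‖Matrix.toEuclideanCLM (𝕜 := ℂ) (n := N) A‖

/-- A sequence of maps `αₘ : G → U(d m)` is an asymptotic representation if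
`‖αₘ(gh) − αₘ(g)αₘ(h)‖ → 0` for all `g h : G`. -/
def IsAsymptoticRep {G : Type*} [Group G] (d : ℕ → ℕ)
    (α : ∀ m : ℕ, G → Matrix.unitaryGroup (Fin (d m)) ℂ) : Prop :=
  ∀ g h : G,
    Tendsto (fun m : ℕ =>
      matOpNorm ((α m (g * h) : Matrix (Fin (d m)) (Fin (d m)) ℂ) -
        (α m g : Matrix (Fin (d m)) (Fin (d m)) ℂ) *
        (α m h : Matrix (Fin (d m)) (Fin (d m)) ℂ)))
      atTop (nhds 0)

/-- A group is MF if it admits an asymptotic representation `(αₘ)` such that, for every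
`g ≠ 1`, `‖αₘ(g) − 1‖` does not converge to `0`. -/
def IsMFGroup (G : Type*) [Group G] : Prop :=
  ∃ (d : ℕ → ℕ) (α : ∀ m : ℕ, G → Matrix.unitaryGroup (Fin (d m)) ℂ),
    IsAsymptoticRep d α ∧
    ∀ g : G, g ≠ 1 →
      ¬ Tendsto (fun m : ℕ =>
          matOpNorm ((α m g : Matrix (Fin (d m)) (Fin (d m)) ℂ) - 1))
        atTop (nhds 0)

/-- The restricted direct product `⨁ⱼ Gⱼ`: the subgroup of `∏ⱼ Gⱼ` consisting of those
elements `g` with `g j = 1` for all but finitely many `j`. -/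
def restrictedProduct (G : ℕ → Type*) [∀ j, Group (G j)] : Subgroup (∀ j, G j) where
  carrier := {g | {j | g j ≠ 1}.Finite}
  one_mem' := by simp
  mul_mem' := by
    intro a b ha hb
    refine Set.Finite.subset (ha.union hb) fun j hj => ?_
    simp only [Set.mem_setOf_eq, Pi.mul_apply, Set.mem_union, ne_eq] at hj ⊢
    by_contra hc
    push_neg at hc
    exact hj (by rw [hc.1, hc.2, one_mul])
  inv_mem' := by
    intro a ha
    refine ha.subset fun j hj => ?_
    simpa only [Set.mem_setOf_eq, Pi.inv_apply, ne_eq, inv_eq_one] using hj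

/-!
Normalize each asymptotic representation so that it sends `1` to the identity; this changes
nothing asymptotically because `‖αₘ(1) - 1‖ = ‖αₘ(1)αₘ(1) - αₘ(1)‖ → 0`. At stage `m` let the
first `m` factors act by block-diagonal matrices. Block-diagonal embedding is an injective
*-homomorphism of C⋆-algebras, hence isometric for the sup norm over the blocks. The defect of
`g, h` then only involves the finitely many coordinates where `g` or `h` is nontrivial, each
tending to `0`, while for `g ≠ 1` a coordinate `j` with `gⱼ ≠ 1` bounds `‖γₘ(g) - 1‖` from below
by `‖αₘ(gⱼ) - 1‖` once `m > j`.
-/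

open Topology
open scoped Matrix.Norms.L2Operator

lemma Pi.mem_unitary {ι : Type*} {R : ι → Type*} [∀ i, Monoid (R i)] [∀ i, StarMul (R i)]
    {x : ∀ i, R i} (hx : ∀ i, x i ∈ unitary (R i)) : x ∈ unitary (∀ i, R i) :=
  Unitary.mem_iff.2
    ⟨funext fun i => (Unitary.mem_iff.1 (hx i)).1, funext fun i => (Unitary.mem_iff.1 (hx i)).2⟩

namespace Matrix

variable (R : Type*) [CommSemiring R] [StarRing R]

def reindexStarAlgEquiv {m n : Type*} [Fintype m] [DecidableEq m] [Fintype n] [DecidableEq n]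
    (e : m ≃ n) : Matrix m m R ≃⋆ₐ[R] Matrix n n R :=
  { reindexAlgEquiv R R e with
    map_smul' := map_smul (reindexAlgEquiv R R e)
    map_star' := fun A => (conjTranspose_reindex e e A).symm }

def blockDiagonal'StarAlgHom {ι : Type*} [Fintype ι] [DecidableEq ι] (N : ι → Type*)
    [∀ i, Fintype (N i)] [∀ i, DecidableEq (N i)] :
    (∀ i, Matrix (N i) (N i) R) →⋆ₐ[R] Matrix (Σ i, N i) (Σ i, N i) R :=
  { blockDiagonal'RingHom N R with
    commutes' := fun r => by
      simp [Algebra.algebraMap_eq_smul_one, blockDiagonal'_smul, blockDiagonal'_one]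
    map_star' := fun M => (blockDiagonal'_conjTranspose M).symm }

noncomputable def blockDiagonalFinStarAlgHom {k : ℕ} (n : Fin k → ℕ) :
    (∀ i, Matrix (Fin (n i)) (Fin (n i)) R) →⋆ₐ[R]
      Matrix (Fin (∑ i, n i)) (Fin (∑ i, n i)) R :=
  (reindexStarAlgEquiv R (finSigmaFinEquiv (n := n))).toStarAlgHom.comp
    (blockDiagonal'StarAlgHom R _)

theorem blockDiagonalFinStarAlgHom_injective {k : ℕ} (n : Fin k → ℕ) :
    Function.Injective (blockDiagonalFinStarAlgHom R n) :=
  (reindexStarAlgEquiv R finSigmaFinEquiv).injective.comp (blockDiagonal'_injective (α := R))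

theorem norm_blockDiagonalFinStarAlgHom {k : ℕ} (n : Fin k → ℕ)
    (M : ∀ i, Matrix (Fin (n i)) (Fin (n i)) ℂ) :
    ‖blockDiagonalFinStarAlgHom ℂ n M‖ = ‖M‖ :=
  NonUnitalStarAlgHom.norm_map _ (blockDiagonalFinStarAlgHom_injective ℂ n) M

end Matrix

lemma matOpNorm_eq_norm {N : Type*} [Fintype N] [DecidableEq N] (A : Matrix N N ℂ) :
    matOpNorm A = ‖A‖ :=
  rfl

lemma norm_update_one_sub_mul_le {G A : Type*} [Group G] [DecidableEq G] [NormedRing A]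
    [StarRing A] (u : G → unitary A) (g h : G) :
    ‖(Function.update u 1 1 (g * h) : A) - Function.update u 1 1 g * Function.update u 1 1 h‖ ≤
      ‖(u (g * h) : A) - u g * u h‖ + ‖(u 1 : A) - 1‖ := by
  have hnonneg : 0 ≤ ‖(u (g * h) : A) - u g * u h‖ + ‖(u 1 : A) - 1‖ := by positivity
  by_cases hg : g = 1
  · subst hg; simpa using hnonneg
  by_cases hh : h = 1
  · subst hh; simpa using hnonneg
  simp only [Function.update_of_ne hg, Function.update_of_ne hh]
  by_cases hgh : g * h = 1
  · rw [hgh, Function.update_self, OneMemClass.coe_one, add_comm, norm_sub_rev (u 1 : A) 1]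
    exact norm_sub_le_norm_sub_add_norm_sub _ _ _
  · rw [Function.update_of_ne hgh]
    exact le_add_of_nonneg_right (norm_nonneg _)

section AsymptoticRep

variable {G : Type*} [Group G] {d : ℕ → ℕ} {α : ∀ m, G → Matrix.unitaryGroup (Fin (d m)) ℂ}

lemma IsAsymptoticRep.tendsto_norm_map_one_sub_one (hα : IsAsymptoticRep d α) :
    Tendsto (fun m => ‖(α m 1 : Matrix (Fin (d m)) (Fin (d m)) ℂ) - 1‖) atTop (𝓝 0) := by
  refine (hα 1 1).congr fun m => ?_
  have key :=
    CStarRing.norm_coe_unitary_mul (α m 1) ((α m 1 : Matrix (Fin (d m)) (Fin (d m)) ℂ) - 1)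
  rw [mul_sub, mul_one] at key
  rw [matOpNorm_eq_norm, one_mul, norm_sub_rev, key]

lemma IsAsymptoticRep.update_one [DecidableEq G] (hα : IsAsymptoticRep d α) :
    IsAsymptoticRep d fun m => Function.update (α m) 1 1 := by
  intro g h
  simp only [matOpNorm_eq_norm]
  refine squeeze_zero (fun _ => norm_nonneg _) (fun m => norm_update_one_sub_mul_le (α m) g h) ?_
  simpa [matOpNorm_eq_norm] using (hα g h).add hα.tendsto_norm_map_one_sub_one

end AsymptoticRep

lemma IsMFGroup.exists_map_one_eq_one {G : Type*} [Group G] (hG : IsMFGroup G) :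
    ∃ (d : ℕ → ℕ) (α : ∀ m, G → Matrix.unitaryGroup (Fin (d m)) ℂ),
      IsAsymptoticRep d α ∧ (∀ m, α m 1 = 1) ∧
      ∀ g : G, g ≠ 1 →
        ¬ Tendsto (fun m => ‖(α m g : Matrix (Fin (d m)) (Fin (d m)) ℂ) - 1‖) atTop (𝓝 0) := by
  classical
  obtain ⟨d, α, hα, hfaithful⟩ := hG
  exact ⟨d, fun m => Function.update (α m) 1 1, hα.update_one, fun m => Function.update_self ..,
    fun g hg => by simpa [Function.update_of_ne hg, matOpNorm_eq_norm] using hfaithful g hg⟩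

lemma tendsto_norm_pi_fin_of_finite_support {E : ℕ → ℕ → Type*}
    [∀ j m, SeminormedAddCommGroup (E j m)] {x : ∀ j m, E j m} (S : Finset ℕ)
    (hS : ∀ j ∉ S, ∀ m, x j m = 0) (hx : ∀ j, Tendsto (fun m => ‖x j m‖) atTop (𝓝 0)) :
    Tendsto (fun m => ‖fun j : Fin m => x j m‖) atTop (𝓝 0) := by
  refine squeeze_zero (fun _ => norm_nonneg _) (fun m => ?_)
    (by simpa using tendsto_finsetSum S fun j _ => hx j)
  refine (pi_norm_le_iff_of_nonneg (by positivity)).2 fun j => ?_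
  by_cases hj : (j : ℕ) ∈ S
  · exact Finset.single_le_sum (f := fun j => ‖x j m‖) (fun _ _ => norm_nonneg _) hj
  · rw [hS j hj m, norm_zero]
    positivity

theorem stmt8_general (G : ℕ → Type*) [∀ j, Group (G j)]
    (h : ∀ j, IsMFGroup (G j)) :
    IsMFGroup (restrictedProduct G) := by
  choose d α hα hα_one hα_faithful using fun j => (h j).exists_map_one_eq_one
  let Φ m := Matrix.blockDiagonalFinStarAlgHom ℂ fun j : Fin m => d j m
  refine ⟨fun m => ∑ j : Fin m, d j m,
    fun m g => ⟨Φ m fun j => α j m (g.1 j),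
      Unitary.map_mem _ (Pi.mem_unitary fun j => (α j m _).2)⟩,
    fun g g' => ?_, fun g hg => ?_⟩
  · show Tendsto (fun m => ‖Φ m _ - Φ m _ * Φ m _‖) atTop (𝓝 0)
    simp only [← map_mul, ← map_sub, Φ, Matrix.norm_blockDiagonalFinStarAlgHom]
    refine tendsto_norm_pi_fin_of_finite_support
      (x := fun j m => (α j m (g.1 j * g'.1 j) : Matrix (Fin (d j m)) (Fin (d j m)) ℂ) -
        α j m (g.1 j) * α j m (g'.1 j))
      (g.2.union g'.2).toFinset (fun j hj m => ?_) fun j => hα j (g.1 j) (g'.1 j)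
    obtain ⟨hgj, hg'j⟩ : g.1 j = 1 ∧ g'.1 j = 1 := by simpa using hj
    simp [hgj, hg'j, hα_one]
  · obtain ⟨j, hj⟩ : ∃ j, g.1 j ≠ 1 := Function.ne_iff.1 fun h1 => hg (Subtype.ext h1)
    refine fun hlim => hα_faithful j _ hj (squeeze_zero' (.of_forall fun _ => norm_nonneg _)
      ((eventually_gt_atTop j).mono fun m hm => ?_) hlim)
    show ‖_‖ ≤ ‖Φ m _ - 1‖
    rw [← map_one (Φ m), ← map_sub, Matrix.norm_blockDiagonalFinStarAlgHom]
    exact norm_le_pi_norm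
      (fun i : Fin m => (α i m (g.1 i) : Matrix (Fin (d i m)) (Fin (d i m)) ℂ) - 1) ⟨j, hm⟩

theorem stmt8 (G : ℕ → Type*) [∀ j, Group (G j)] [∀ j, Countable (G j)]
    (h : ∀ j, IsMFGroup (G j)) :
    IsMFGroup (restrictedProduct G) :=
  stmt8_general G h
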